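/- arXiv:1504.02045 — 4 statements merged into one kernel-verified Lean document; each statement's English description precedes it below -/
import Mathlib

section
/- Let d be a positive integer, γ > 0, and let X, Y be symmetric d×d real matrices such that the block matrix [[X, 0], [0, -Y]] is less than or equal (in the Loewner order on symmetric 2d×2d matrices) to γ·[[I, -I], [-I, I]]. Then there exists a continuously differentiable map λ ↦ Z_λ from [0,1] to the symmetric d×d matrices such that Z_0 = X, Z_λ ≤ Y for every λ ∈ [0,1], X ≤ Z_λ for every λ, and dZ_λ/dλ = γ⁻¹ Z_λ² for every λ ∈ [0,1]. -/
open Matrix Set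

attribute [local instance] Matrix.linftyOpNormedRing Matrix.linftyOpNormedAlgebra

private noncomputable def entryCLM (d : ℕ) (i j : Fin d) : Matrix (Fin d) (Fin d) ℝ →L[ℝ] ℝ :=
  LinearMap.toContinuousLinearMap
    { toFun := fun M => M i j
      map_add' := fun _ _ => rfl
      map_smul' := fun _ _ => rfl }

private noncomputable def outCLM (d : ℕ) (γ : ℝ) (X : Matrix (Fin d) (Fin d) ℝ)
    (i j : Fin d) : Matrix (Fin d) (Fin d) ℝ →L[ℝ] ℝ :=
  LinearMap.toContinuousLinearMap
    { toFun := fun M => γ * ((M * X) i j)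
      map_add' := fun A B => by simp [Matrix.add_mul]; ring
      map_smul' := fun c A => by simp [Matrix.smul_mul]; ring }

@[simp] private lemma outCLM_apply (d : ℕ) (γ : ℝ) (X : Matrix (Fin d) (Fin d) ℝ)
    (i j : Fin d) (M : Matrix (Fin d) (Fin d) ℝ) :
    outCLM d γ X i j M = γ * ((M * X) i j) := rfl

@[simp] private lemma entryCLM_apply (d : ℕ) (i j : Fin d) (M : Matrix (Fin d) (Fin d) ℝ) :
    entryCLM d i j M = M i j := rfl

private lemma isHermitian_of_isSymm {d : ℕ} {M : Matrix (Fin d) (Fin d) ℝ} (h : M.IsSymm) :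
    M.IsHermitian := by
  ext i j
  simpa [Matrix.conjTranspose_apply] using congrFun (congrFun h i) j

/-- Lemma A.2 (matrix flow): given the block Loewner inequality, there is a C¹ family
`Z_λ` with `Z_0 = X`, `X ≤ Z_λ ≤ Y` and `dZ_λ/dλ = γ⁻¹ Z_λ²`. -/
theorem matrix_trick (d : ℕ) (hd : 0 < d) (γ : ℝ) (hγ : 0 < γ)
    (X Y : Matrix (Fin d) (Fin d) ℝ) (hX : X.IsSymm) (hY : Y.IsSymm)
    (h : ∀ ξ η : Fin d → ℝ,
      X.mulVec ξ ⬝ᵥ ξ - Y.mulVec η ⬝ᵥ η ≤ γ * ∑ i, (ξ i - η i) ^ 2) :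
    ∃ Z : ℝ → Matrix (Fin d) (Fin d) ℝ,
      (∀ i j, ContDiffOn ℝ 1 (fun l => Z l i j) (Icc (0:ℝ) 1)) ∧
      Z 0 = X ∧
      (∀ l ∈ Icc (0:ℝ) 1, (Z l).IsSymm) ∧
      (∀ l ∈ Icc (0:ℝ) 1, ∀ v : Fin d → ℝ, (Z l).mulVec v ⬝ᵥ v ≤ Y.mulVec v ⬝ᵥ v) ∧
      (∀ l ∈ Icc (0:ℝ) 1, ∀ v : Fin d → ℝ, X.mulVec v ⬝ᵥ v ≤ (Z l).mulVec v ⬝ᵥ v) ∧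
      (∀ l ∈ Icc (0:ℝ) 1, ∀ i j,
        HasDerivAt (fun s => Z s i j) (γ⁻¹ * ((Z l * Z l) i j)) l) := by
  classical
  have hds : ∀ ξ : Fin d → ℝ, (∑ i, (ξ i) ^ 2) = ξ ⬝ᵥ ξ := fun ξ => by
    simp [dotProduct, sq]
  -- nonstrict bound X ≤ γ I
  have hle : ∀ ξ : Fin d → ℝ, X *ᵥ ξ ⬝ᵥ ξ ≤ γ * (ξ ⬝ᵥ ξ) := by
    intro ξ
    have := h ξ 0
    simpa [hds] using this
  have hdpos : ∀ v : Fin d → ℝ, v ≠ 0 → 0 < v ⬝ᵥ v := by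
    intro v hv
    rcases (Finset.sum_nonneg fun i _ => mul_self_nonneg (v i) : 0 ≤ v ⬝ᵥ v).lt_or_eq with h' | h'
    · exact h'
    · exact absurd (dotProduct_self_eq_zero.mp h'.symm) hv
  -- strict bound X < γ I
  have key : ∀ ξ : Fin d → ℝ, ξ ≠ 0 → X *ᵥ ξ ⬝ᵥ ξ < γ * (ξ ⬝ᵥ ξ) := by
    intro ξ hξ
    rcases (hle ξ).lt_or_eq with h' | h'
    · exact h'
    exfalso
    set s := ξ ⬝ᵥ ξ with hs
    have hspos : 0 < s := hdpos ξ hξ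
    set y := Y *ᵥ ξ ⬝ᵥ ξ with hy
    set M := max (γ * s + y) (γ * s) with hM
    have hMpos : 0 < M := lt_of_lt_of_le (by positivity) (le_max_right _ _)
    set t := γ * s / M with ht
    have htpos : 0 < t := by positivity
    have htM : t * M = γ * s := div_mul_cancel₀ _ hMpos.ne'
    have h2 := h ξ (t • ξ)
    have hL : Y *ᵥ (t • ξ) ⬝ᵥ (t • ξ) = t ^ 2 * y := by
      rw [mulVec_smul, smul_dotProduct, dotProduct_smul]
      simp [hy, smul_eq_mul]; ring
    have hR : (∑ i, (ξ i - (t • ξ) i) ^ 2) = (1 - t) ^ 2 * s := by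
      have : ∀ i ∈ Finset.univ, (ξ i - (t • ξ) i) ^ 2 = (1 - t) ^ 2 * (ξ i * ξ i) := by
        intro i _; simp [smul_eq_mul]; ring
      rw [Finset.sum_congr rfl this, ← Finset.mul_sum]
      simp [hs, dotProduct]
    rw [hL, hR, h'] at h2
    nlinarith [mul_le_mul_of_nonneg_left (le_max_left (γ * s + y) (γ * s)) (le_of_lt (mul_pos htpos htpos)), mul_pos (mul_pos hγ htpos) hspos]
  -- the matrix family B and its inverse N
  set B : ℝ → Matrix (Fin d) (Fin d) ℝ := fun s => γ • (1 : Matrix (Fin d) (Fin d) ℝ) - s • X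
    with hBdef
  set N : ℝ → Matrix (Fin d) (Fin d) ℝ := fun s => Ring.inverse (B s) with hNdef
  have hBsymm : ∀ l, (B l).IsSymm := by
    intro l
    show (B l)ᵀ = B l
    have hXt : Xᵀ = X := hX
    rw [hBdef]
    simp only [transpose_sub, transpose_smul, transpose_one, hXt]
  have hquad : ∀ (l : ℝ) (v : Fin d → ℝ),
      B l *ᵥ v ⬝ᵥ v = γ * (v ⬝ᵥ v) - l * (X *ᵥ v ⬝ᵥ v) := by
    intro l v
    rw [hBdef]
    simp [sub_mulVec, smul_mulVec, sub_dotProduct, smul_dotProduct, one_mulVec,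
      smul_eq_mul]
  have hBpd : ∀ l ∈ Icc (0:ℝ) 1, (B l).PosDef := by
    intro l hl
    refine PosDef.of_dotProduct_mulVec_pos (isHermitian_of_isSymm (hBsymm l)) fun v hv => ?_
    have h1 : star v ⬝ᵥ (B l *ᵥ v) = B l *ᵥ v ⬝ᵥ v := by
      rw [star_trivial, dotProduct_comm]
    rw [h1, hquad]
    have h2 := key v hv
    have h3 := hdpos v hv
    rcases le_or_gt (X *ᵥ v ⬝ᵥ v) 0 with h4 | h4
    · nlinarith [hl.1, hl.2, mul_nonneg hl.1 (neg_nonneg.mpr h4)]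
    · nlinarith [hl.1, hl.2, mul_le_mul_of_nonneg_right hl.2 (le_of_lt h4)]
  have hU : ∀ l ∈ Icc (0:ℝ) 1, IsUnit (B l) := fun l hl => (hBpd l hl).isUnit
  have hNB : ∀ l ∈ Icc (0:ℝ) 1, N l * B l = 1 := fun l hl =>
    Ring.inverse_mul_cancel _ (hU l hl)
  have hBN : ∀ l ∈ Icc (0:ℝ) 1, B l * N l = 1 := fun l hl =>
    Ring.mul_inverse_cancel _ (hU l hl)
  have hcomm : ∀ l : ℝ, X * B l = B l * X := by
    intro l
    rw [hBdef]
    simp only [mul_sub, sub_mul, Matrix.mul_smul, Matrix.smul_mul, mul_one, one_mul]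
  have hNX : ∀ l ∈ Icc (0:ℝ) 1, N l * X = X * N l := by
    intro l hl
    have e1 : N l * (X * B l * N l) = N l * (B l * X * N l) := by rw [hcomm l]
    simp only [mul_assoc] at e1
    rw [hBN l hl, mul_one] at e1
    rw [← mul_assoc (N l) (B l) (X * N l), hNB l hl, one_mul] at e1
    exact e1
  -- the flow
  set Z : ℝ → Matrix (Fin d) (Fin d) ℝ := fun s => γ • (N s * X) with hZdef
  have h0Icc : (0:ℝ) ∈ Icc (0:ℝ) 1 := ⟨le_refl 0, zero_le_one⟩
  have hN0 : N 0 = γ⁻¹ • (1 : Matrix (Fin d) (Fin d) ℝ) := by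
    have hBc : B 0 * (γ⁻¹ • (1 : Matrix (Fin d) (Fin d) ℝ)) = 1 := by
      rw [hBdef]
      simp [Matrix.smul_mul, Matrix.mul_smul, smul_smul, mul_inv_cancel₀ hγ.ne',
        inv_mul_cancel₀ hγ.ne']
    calc N 0 = N 0 * (B 0 * (γ⁻¹ • (1 : Matrix (Fin d) (Fin d) ℝ))) := by rw [hBc, mul_one]
      _ = (N 0 * B 0) * (γ⁻¹ • (1 : Matrix (Fin d) (Fin d) ℝ)) := (mul_assoc _ _ _).symm
      _ = γ⁻¹ • (1 : Matrix (Fin d) (Fin d) ℝ) := by rw [hNB 0 h0Icc, one_mul]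
  have hZ0 : Z 0 = X := by
    rw [hZdef]
    simp [hN0, Matrix.smul_mul, smul_smul, mul_inv_cancel₀ hγ.ne']
  -- symmetry
  have hNt : ∀ l ∈ Icc (0:ℝ) 1, (N l)ᵀ = N l := by
    intro l hl
    have h1 : B l * (N l)ᵀ = 1 := by
      have := congrArg Matrix.transpose (hNB l hl)
      rwa [transpose_mul, hBsymm l, transpose_one] at this
    calc (N l)ᵀ = (N l * B l) * (N l)ᵀ := by rw [hNB l hl, one_mul]
      _ = N l * (B l * (N l)ᵀ) := mul_assoc _ _ _
      _ = N l := by rw [h1, mul_one]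
  have hZsymm : ∀ l ∈ Icc (0:ℝ) 1, (Z l).IsSymm := by
    intro l hl
    show (Z l)ᵀ = Z l
    have hXt : Xᵀ = X := hX
    rw [hZdef]
    simp only [transpose_smul, transpose_mul, hXt, hNt l hl, hNX l hl]
  -- upper bound
  have hupper : ∀ l ∈ Icc (0:ℝ) 1, ∀ v : Fin d → ℝ, Z l *ᵥ v ⬝ᵥ v ≤ Y *ᵥ v ⬝ᵥ v := by
    intro l hl v
    set ξ : Fin d → ℝ := γ • (N l *ᵥ v) with hξdef
    have hBξ : B l *ᵥ ξ = γ • v := by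
      rw [hξdef, mulVec_smul, mulVec_mulVec, hBN l hl, one_mulVec]
    have hcoord : ∀ i, v i = ξ i - l / γ * ((X *ᵥ ξ) i) := by
      intro i
      have h1 := congrFun hBξ i
      rw [hBdef] at h1
      simp only [sub_mulVec, smul_mulVec, one_mulVec, Pi.sub_apply, Pi.smul_apply,
        smul_eq_mul] at h1
      field_simp
      linarith
    have hZv : Z l *ᵥ v = X *ᵥ ξ := by
      rw [hZdef, hξdef]
      simp only [smul_mulVec, mulVec_mulVec, hNX l hl, mulVec_smul]
    rw [hZv]
    set a := X *ᵥ ξ ⬝ᵥ ξ with ha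
    set w := ∑ i, ((X *ᵥ ξ) i) ^ 2 with hw
    have hwpos : 0 ≤ w := Finset.sum_nonneg fun i _ => sq_nonneg _
    have hgoal_eq : X *ᵥ ξ ⬝ᵥ v = a - l / γ * w := by
      have h1 : X *ᵥ ξ ⬝ᵥ v = ∑ i, (X *ᵥ ξ) i * (ξ i - l / γ * ((X *ᵥ ξ) i)) := by
        rw [dotProduct]
        exact Finset.sum_congr rfl fun i _ => by rw [← hcoord i]
      rw [h1, ha, hw, dotProduct, Finset.mul_sum, ← Finset.sum_sub_distrib]
      exact Finset.sum_congr rfl fun i _ => by ring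
    have hsum : (∑ i, (ξ i - v i) ^ 2) = (l / γ) ^ 2 * w := by
      rw [hw, Finset.mul_sum]
      exact Finset.sum_congr rfl fun i _ => by rw [hcoord i]; ring
    have hmain := h ξ v
    rw [hsum] at hmain
    rw [hgoal_eq]
    have hll : l ^ 2 ≤ l := by nlinarith [hl.1, hl.2]
    have hkey2 : l ^ 2 / γ * w ≤ l / γ * w := by
      have h5 : l ^ 2 / γ ≤ l / γ := by gcongr
      exact mul_le_mul_of_nonneg_right h5 hwpos
    have hγw : γ * ((l / γ) ^ 2 * w) = l ^ 2 / γ * w := by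
      field_simp
    linarith [hmain]
  -- lower bound
  have hNpsd : ∀ l ∈ Icc (0:ℝ) 1, ∀ u : Fin d → ℝ, 0 ≤ u ⬝ᵥ (N l *ᵥ u) := by
    intro l hl u
    have hpd : (N l).PosDef := by
      have h1 := (hBpd l hl).inv
      rw [Matrix.nonsing_inv_eq_ringInverse] at h1
      rw [hNdef]
      exact h1
    have := hpd.posSemidef.dotProduct_mulVec_nonneg u
    rwa [star_trivial] at this
  have hZX : ∀ l ∈ Icc (0:ℝ) 1, Z l - X = l • (X * N l * X) := by
    intro l hl
    have e1 : γ • N l - 1 = l • (N l * X) := by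
      calc γ • N l - 1 = γ • N l - N l * B l := by rw [hNB l hl]
        _ = N l * (γ • (1 : Matrix (Fin d) (Fin d) ℝ)) - N l * B l := by
            rw [Matrix.mul_smul, mul_one]
        _ = N l * (γ • (1 : Matrix (Fin d) (Fin d) ℝ) - B l) := by rw [← mul_sub]
        _ = N l * (l • X) := by
            congr 1
            rw [hBdef]
            exact sub_sub_cancel _ _
        _ = l • (N l * X) := by rw [Matrix.mul_smul]
    calc Z l - X = (γ • N l - 1) * X := by
          rw [hZdef, Matrix.sub_mul, one_mul, Matrix.smul_mul]
      _ = (l • (N l * X)) * X := by rw [e1]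
      _ = l • (X * N l * X) := by rw [Matrix.smul_mul, hNX l hl]
  have hlower : ∀ l ∈ Icc (0:ℝ) 1, ∀ v : Fin d → ℝ, X *ᵥ v ⬝ᵥ v ≤ Z l *ᵥ v ⬝ᵥ v := by
    intro l hl v
    have e1 : Z l *ᵥ v ⬝ᵥ v - X *ᵥ v ⬝ᵥ v = ((Z l - X) *ᵥ v) ⬝ᵥ v := by
      rw [sub_mulVec, sub_dotProduct]
    have e2 : ((Z l - X) *ᵥ v) ⬝ᵥ v = l * ((X *ᵥ (N l *ᵥ (X *ᵥ v))) ⬝ᵥ v) := by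
      rw [hZX l hl]
      rw [smul_mulVec, smul_dotProduct, smul_eq_mul]
      congr 2
      rw [← mulVec_mulVec, ← mulVec_mulVec]
    have e3 : (X *ᵥ (N l *ᵥ (X *ᵥ v))) ⬝ᵥ v = (N l *ᵥ (X *ᵥ v)) ⬝ᵥ (X *ᵥ v) := by
      rw [dotProduct_comm, dotProduct_mulVec, ← mulVec_transpose, hX, dotProduct_comm]
    have e4 : 0 ≤ (N l *ᵥ (X *ᵥ v)) ⬝ᵥ (X *ᵥ v) := by
      rw [dotProduct_comm]
      exact hNpsd l hl (X *ᵥ v)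
    nlinarith [hl.1, e1, e2, e3, e4, mul_nonneg hl.1 e4]
  -- derivatives
  have hBderiv : ∀ l : ℝ, HasDerivAt B (-X) l := by
    intro l
    rw [hBdef]
    have := ((hasDerivAt_id l).smul_const X).const_sub (γ • (1 : Matrix (Fin d) (Fin d) ℝ))
    simp only [id, one_smul, zero_sub] at this
    exact this
  have hNderiv : ∀ l ∈ Icc (0:ℝ) 1,
      HasDerivAt N (N l * X * N l) l := by
    intro l hl
    have hu := hU l hl
    have hf := hasFDerivAt_ringInverse (𝕜 := ℝ) hu.unit
    rw [hu.unit_spec] at hf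
    have h2 := hf.comp_hasDerivAt l (hBderiv l)
    have hinv : (↑hu.unit⁻¹ : Matrix (Fin d) (Fin d) ℝ) = N l := by
      rw [hNdef, ← Ring.inverse_unit hu.unit, hu.unit_spec]
    simp [hinv] at h2
    exact h2
  have hZderiv : ∀ l ∈ Icc (0:ℝ) 1,
      HasDerivAt Z (γ • (N l * X * N l * X)) l := by
    intro l hl
    rw [hZdef]
    exact ((hNderiv l hl).mul_const X).const_smul γ
  have hZsq : ∀ l ∈ Icc (0:ℝ) 1,
      Z l * Z l = (γ * γ) • (N l * X * N l * X) := by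
    intro l hl
    rw [hZdef]
    rw [Matrix.smul_mul, Matrix.mul_smul, smul_smul]
    congr 1
    simp only [mul_assoc]
  refine ⟨Z, ?_, hZ0, hZsymm, hupper, hlower, ?_⟩
  · -- smoothness
    intro i j l hl
    apply ContDiffAt.contDiffWithinAt
    have hBc : ContDiff ℝ 1 B := by
      rw [hBdef]
      exact contDiff_const.sub (contDiff_id.smul contDiff_const)
    have hu := hU l hl
    have hNc : ContDiffAt ℝ 1 N l := by
      have hg : ContDiffAt ℝ 1 (Ring.inverse :
          Matrix (Fin d) (Fin d) ℝ → Matrix (Fin d) (Fin d) ℝ) (B l) := by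
        have := contDiffAt_ringInverse (𝕜 := ℝ) (n := 1) hu.unit
        rwa [hu.unit_spec] at this
      exact hg.comp l hBc.contDiffAt
    have hout : ContDiff ℝ 1 (fun M : Matrix (Fin d) (Fin d) ℝ => γ * ((M * X) i j)) :=
      (outCLM d γ X i j).contDiff
    have := hout.contDiffAt.comp l hNc
    have heq : (fun s => Z s i j) = (fun M : Matrix (Fin d) (Fin d) ℝ =>
        γ * ((M * X) i j)) ∘ N := by
      funext s
      simp [hZdef, Matrix.smul_apply, smul_eq_mul]
    rw [heq]
    exact this
  · -- derivative
    intro l hl i j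
    have h1 := (entryCLM d i j).hasFDerivAt.comp_hasDerivAt l (hZderiv l hl)
    have h2 : γ⁻¹ * ((Z l * Z l) i j) = (γ • (N l * X * N l * X)) i j := by
      rw [hZsq l hl]
      simp only [Matrix.smul_apply, smul_eq_mul]
      field_simp
    rw [h2]
    exact h1
end

section
/- Let X be a symmetric d×d real matrix and c > 0 a real number with X < c·I (i.e. c·I - X is positive definite). Then for every η ∈ ℝ^d, the supremum over ξ ∈ ℝ^d of (Xξ·ξ - c|ξ - η|²) is attained and equals (X (I - X/c)⁻¹ η) · η. -/
open Matrix Set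

lemma symm_dot {d : ℕ} (M : Matrix (Fin d) (Fin d) ℝ) (hM : M.IsSymm)
    (a b : Fin d → ℝ) : M.mulVec a ⬝ᵥ b = M.mulVec b ⬝ᵥ a := by
  simp only [Matrix.mulVec, dotProduct, Finset.sum_mul]
  rw [Finset.sum_comm]
  refine Finset.sum_congr rfl fun i _ => Finset.sum_congr rfl fun j _ => ?_
  rw [hM.apply i j]; ring

/-- The quadratic supremum identity: if `X < c·I`, then for each `η`,
`sup_ξ (Xξ·ξ - c|ξ-η|²)` is attained and equals `(X (I - X/c)⁻¹ η)·η`. -/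
theorem quadratic_sup (d : ℕ) (c : ℝ) (hc : 0 < c)
    (X : Matrix (Fin d) (Fin d) ℝ) (hX : X.IsSymm)
    (hlt : ∀ v : Fin d → ℝ, v ≠ 0 →
      0 < ((c • (1 : Matrix (Fin d) (Fin d) ℝ) - X).mulVec v) ⬝ᵥ v) :
    ∀ η : Fin d → ℝ,
      IsGreatest
        (Set.range fun ξ : Fin d → ℝ =>
          X.mulVec ξ ⬝ᵥ ξ - c * ∑ i, (ξ i - η i) ^ 2)
        ((X * ((1 : Matrix (Fin d) (Fin d) ℝ) - c⁻¹ • X)⁻¹).mulVec η ⬝ᵥ η) := by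
  intro η
  set A : Matrix (Fin d) (Fin d) ℝ := c • (1 : Matrix (Fin d) (Fin d) ℝ) - X with hA
  have hAsymm : A.IsSymm := by
    simp [Matrix.IsSymm, hA, Matrix.transpose_sub, Matrix.transpose_smul, hX.eq]
  have hAherm : A.IsHermitian := by
    unfold Matrix.IsHermitian; rw [Matrix.conjTranspose_eq_transpose_of_trivial]; exact hAsymm
  have hApos : A.PosDef := Matrix.posDef_iff_dotProduct_mulVec.mpr ⟨hAherm, fun x hx => by
    simpa [dotProduct_comm] using hlt x hx⟩
  have hdet : IsUnit A.det := hApos.det_pos.ne'.isUnit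
  have hinv : A * A⁻¹ = 1 := Matrix.mul_nonsing_inv A hdet
  -- the inverse matrix identity
  have hmat : ((1 : Matrix (Fin d) (Fin d) ℝ) - c⁻¹ • X)⁻¹ = c • A⁻¹ := by
    apply Matrix.inv_eq_right_inv
    have h1 : (1 : Matrix (Fin d) (Fin d) ℝ) - c⁻¹ • X = c⁻¹ • A := by
      rw [hA, smul_sub, smul_smul, inv_mul_cancel₀ hc.ne']; simp
    rw [h1, Matrix.smul_mul, Matrix.mul_smul, smul_smul, inv_mul_cancel₀ hc.ne', one_smul, hinv]
  set ξs : Fin d → ℝ := (c • A⁻¹).mulVec η with hξs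
  have hAξs : A.mulVec ξs = c • η := by
    rw [hξs, Matrix.mulVec_mulVec, Matrix.mul_smul, hinv, Matrix.smul_mulVec,
      Matrix.one_mulVec]
  -- key identity
  have key : ∀ ξ : Fin d → ℝ,
      X.mulVec ξ ⬝ᵥ ξ - c * ∑ i, (ξ i - η i) ^ 2
        = ((X * ((1 : Matrix (Fin d) (Fin d) ℝ) - c⁻¹ • X)⁻¹).mulVec η ⬝ᵥ η)
          - (A.mulVec (ξ - ξs)) ⬝ᵥ (ξ - ξs) := by
    intro ξ
    have hsum : ∑ i, (ξ i - η i) ^ 2 = (ξ - η) ⬝ᵥ (ξ - η) := by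
      simp [dotProduct, sq]
    have hXξs : X.mulVec ξs = c • ξs - c • η := by
      have : X = c • (1 : Matrix (Fin d) (Fin d) ℝ) - A := by rw [hA, sub_sub_cancel]
      rw [this, Matrix.sub_mulVec, hAξs, Matrix.smul_mulVec, Matrix.one_mulVec]
    have hMη : (X * ((1 : Matrix (Fin d) (Fin d) ℝ) - c⁻¹ • X)⁻¹).mulVec η
        = X.mulVec ξs := by
      rw [hmat, ← Matrix.mulVec_mulVec, hξs]
    rw [hMη, hsum]
    have e1 : A.mulVec ξ ⬝ᵥ ξs = c * (η ⬝ᵥ ξ) := by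
      rw [symm_dot A hAsymm, hAξs, smul_dotProduct, smul_eq_mul]
    have e2 : A.mulVec ξs ⬝ᵥ ξ = c * (η ⬝ᵥ ξ) := by
      rw [hAξs, smul_dotProduct, smul_eq_mul]
    have e3 : A.mulVec ξs ⬝ᵥ ξs = c * (η ⬝ᵥ ξs) := by
      rw [hAξs, smul_dotProduct, smul_eq_mul]
    have e4 : A.mulVec ξ ⬝ᵥ ξ = c * (ξ ⬝ᵥ ξ) - X.mulVec ξ ⬝ᵥ ξ := by
      rw [hA, Matrix.sub_mulVec, sub_dotProduct, Matrix.smul_mulVec,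
        Matrix.one_mulVec, smul_dotProduct, smul_eq_mul]
    have e5 : X.mulVec ξs ⬝ᵥ η = c * (ξs ⬝ᵥ η) - c * (η ⬝ᵥ η) := by
      rw [hXξs, sub_dotProduct, smul_dotProduct, smul_dotProduct,
        smul_eq_mul, smul_eq_mul]
    have expand : A.mulVec (ξ - ξs) ⬝ᵥ (ξ - ξs)
        = A.mulVec ξ ⬝ᵥ ξ - A.mulVec ξ ⬝ᵥ ξs - A.mulVec ξs ⬝ᵥ ξ + A.mulVec ξs ⬝ᵥ ξs := by
      rw [Matrix.mulVec_sub, sub_dotProduct, dotProduct_sub,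
        dotProduct_sub]
      ring
    have dcomm1 : ξ ⬝ᵥ η = η ⬝ᵥ ξ := dotProduct_comm _ _
    have dcomm2 : ξs ⬝ᵥ η = η ⬝ᵥ ξs := dotProduct_comm _ _
    have dexp : (ξ - η) ⬝ᵥ (ξ - η) = ξ ⬝ᵥ ξ - ξ ⬝ᵥ η - η ⬝ᵥ ξ + η ⬝ᵥ η := by
      rw [sub_dotProduct, dotProduct_sub, dotProduct_sub]; ring
    rw [expand, dexp, e1, e2, e3, e4, e5, dcomm1, dcomm2]
    ring
  constructor
  · refine ⟨ξs, ?_⟩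
    simp only
    rw [key ξs]
    simp
  · rintro y ⟨ξ, rfl⟩
    simp only
    rw [key ξ]
    rcases eq_or_ne ξ ξs with h | h
    · simp [h]
    · have := hlt (ξ - ξs) (sub_ne_zero.mpr h)
      linarith
end

section
/- Let C₀, L ≥ 1 and let f : (1,∞) → ℝ satisfy |f(t)| ≤ L t for all t > 1 and the approximate additivity estimate |f(t+s) - f(t) - f(s)| ≤ C₀ (s+t)^{1/2} log^{1/2}(1 + s + t) for all s, t > 1. Then there exists a real number m̄ and a constant C (depending only on C₀ and L) such that for every t > 1, | f(t)/t − m̄ | ≤ C t^{-1/2} log^{1/2}(1+t). -/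
open Real Filter Topology

private lemma aux_pow' (u : ℝ) (hu : 1 < u) (k : ℕ) : 1 + 2 ^ k * u ≤ (1 + u) ^ (k + 1) := by
  induction k with
  | zero => norm_num
  | succ k ih =>
    have h1 : (0:ℝ) < (1 + u) ^ (k + 1) := by positivity
    have h2 : (1:ℝ) + 2 ^ (k+1) * u ≤ 2 * (1 + 2 ^ k * u) := by
      rw [pow_succ]; nlinarith
    calc (1:ℝ) + 2 ^ (k+1) * u ≤ 2 * (1 + 2 ^ k * u) := h2
      _ ≤ 2 * (1 + u) ^ (k+1) := by nlinarith
      _ ≤ (1 + u) * (1 + u) ^ (k+1) := by nlinarith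
      _ = (1 + u) ^ (k+1+1) := by ring

private lemma aux_log' (u : ℝ) (hu : 1 < u) (k : ℕ) :
    Real.log (1 + 2 ^ k * u) ≤ ((k:ℝ) + 1) * Real.log (1 + u) := by
  have h0 : (0:ℝ) < 1 + 2 ^ k * u := by positivity
  have h := Real.log_le_log h0 (aux_pow' u hu k)
  rwa [Real.log_pow, Nat.cast_add, Nat.cast_one] at h

private lemma aux_sqrt1 (k : ℕ) :
    Real.sqrt (((k:ℝ) + 2) / 2 ^ (k+1)) ≤ 2 * (3/4) ^ k := by
  have hb : 1 + (k:ℝ) * (1/8) ≤ (1 + 1/8) ^ k := one_add_mul_le_pow (by norm_num) k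
  have h1 : ((k:ℝ) + 2) / 2 ^ (k+1) ≤ (2 * (3/4) ^ k) ^ 2 := by
    have hsq : (2 * (3/4:ℝ) ^ k) ^ 2 = 4 * (9/16) ^ k := by
      rw [mul_pow, ← pow_mul, mul_comm k 2, pow_mul]; norm_num
    rw [hsq, pow_succ, div_le_iff₀ (by positivity)]
    have h2 : (9/16:ℝ)^k * 2^k = (9/8)^k := by rw [← mul_pow]; norm_num
    nlinarith [h2, hb]
  have h := Real.sqrt_le_sqrt h1
  rwa [Real.sqrt_sq (by positivity)] at h

private lemma aux_sqrt2 (k : ℕ) :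
    Real.sqrt (((k:ℝ) + 1) / 2 ^ k) ≤ 3 * (3/4) ^ k := by
  have hb : 1 + (k:ℝ) * (1/8) ≤ (1 + 1/8) ^ k := one_add_mul_le_pow (by norm_num) k
  have h1 : ((k:ℝ) + 1) / 2 ^ k ≤ (3 * (3/4) ^ k) ^ 2 := by
    have hsq : (3 * (3/4:ℝ) ^ k) ^ 2 = 9 * (9/16) ^ k := by
      rw [mul_pow, ← pow_mul, mul_comm k 2, pow_mul]; norm_num
    rw [hsq, div_le_iff₀ (by positivity)]
    have h2 : (9/16:ℝ)^k * 2^k = (9/8)^k := by rw [← mul_pow]; norm_num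
    nlinarith [h2, hb]
  have h := Real.sqrt_le_sqrt h1
  rwa [Real.sqrt_sq (by positivity)] at h

private lemma sqrt_div_helper (X D : ℝ) (hX : 0 ≤ X) (hD : 0 ≤ D) :
    Real.sqrt X / D = Real.sqrt (X / D ^ 2) := by
  rw [Real.sqrt_div hX (D ^ 2), Real.sqrt_sq hD]

private lemma one_lt_pow_mul {u : ℝ} (hu : 1 < u) (n : ℕ) : 1 < 2 ^ n * u := by
  have h1 : (1:ℝ) ≤ 2 ^ n := one_le_pow₀ (by norm_num)
  nlinarith

/-- single doubling step bound -/
private lemma step_bound (C₀ : ℝ) (hC₀ : 0 ≤ C₀) (f : ℝ → ℝ)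
    (hadd : ∀ s t : ℝ, 1 < s → 1 < t →
      |f (t + s) - f t - f s| ≤
        C₀ * (s + t) ^ ((1:ℝ)/2) * (Real.log (1 + s + t)) ^ ((1:ℝ)/2))
    (u : ℝ) (hu : 1 < u) (n : ℕ) :
    |f (2 ^ (n+1) * u) / (2 ^ (n+1) * u) - f (2 ^ n * u) / (2 ^ n * u)| ≤
      C₀ * Real.sqrt (Real.log (1 + u) / u) * (2 * (3/4) ^ n) := by
  have hu0 : 0 < u := lt_trans one_pos hu
  set v : ℝ := 2 ^ n * u with hv
  have hv1 : 1 < v := one_lt_pow_mul hu n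
  have hv0 : 0 < v := lt_trans one_pos hv1
  have hP2 : (2:ℝ) ^ (n+1) * u = 2 * v := by rw [hv, pow_succ]; ring
  have h := hadd v v hv1 hv1
  rw [show (1:ℝ) + v + v = 1 + 2 * v from by ring,
      show v + v = 2 * v from by ring,
      ← Real.sqrt_eq_rpow, ← Real.sqrt_eq_rpow] at h
  have h2v : (0:ℝ) < 2 * v := by linarith
  have hQ0 : 0 ≤ Real.log (1 + 2 * v) := Real.log_nonneg (by linarith)
  have hdiff : f (2*v) / (2*v) - f v / v = (f (2*v) - f v - f v) / (2*v) := by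
    field_simp; ring
  rw [hP2, hdiff, abs_div, abs_of_pos h2v]
  have hstep1 : |f (2*v) - f v - f v| / (2*v) ≤
      C₀ * Real.sqrt (2*v) * Real.sqrt (Real.log (1 + 2*v)) / (2*v) := by
    exact div_le_div_of_nonneg_right h h2v.le
  refine hstep1.trans ?_
  have hkey : C₀ * Real.sqrt (2*v) * Real.sqrt (Real.log (1 + 2*v)) / (2*v)
      = C₀ * Real.sqrt (Real.log (1 + 2*v) / (2*v)) := by
    rw [mul_assoc, mul_div_assoc]
    congr 1
    rw [← Real.sqrt_mul h2v.le, sqrt_div_helper _ _ (by positivity) h2v.le]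
    congr 1
    field_simp
  rw [hkey]
  have hlog : Real.log (1 + 2*v) / (2*v) ≤
      (((n:ℝ) + 2) / 2 ^ (n+1)) * (Real.log (1 + u) / u) := by
    have h1 : Real.log (1 + 2*v) ≤ ((n:ℝ) + 2) * Real.log (1 + u) := by
      have h4 := aux_log' u hu (n+1)
      have h3 : ((↑(n+1):ℝ) + 1) = (n:ℝ) + 2 := by push_cast; ring
      rw [h3] at h4
      have h2 : (1:ℝ) + 2*v = 1 + 2 ^ (n+1) * u := by rw [hP2]
      rw [h2]
      exact h4
    have h2 : Real.log (1 + 2*v) / (2*v) ≤ ((n:ℝ) + 2) * Real.log (1 + u) / (2*v) :=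
      div_le_div_of_nonneg_right h1 h2v.le
    refine h2.trans_eq ?_
    rw [show (2:ℝ)*v = 2 ^ (n+1) * u from hP2.symm]
    field_simp
  have hmono := Real.sqrt_le_sqrt hlog
  have hsplit : Real.sqrt ((((n:ℝ) + 2) / 2 ^ (n+1)) * (Real.log (1 + u) / u))
      = Real.sqrt (((n:ℝ) + 2) / 2 ^ (n+1)) * Real.sqrt (Real.log (1 + u) / u) :=
    Real.sqrt_mul (by positivity) _
  have hfin : Real.sqrt (Real.log (1 + 2*v) / (2*v)) ≤
      (2 * (3/4) ^ n) * Real.sqrt (Real.log (1 + u) / u) := by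
    refine hmono.trans ?_
    rw [hsplit]
    exact mul_le_mul_of_nonneg_right (aux_sqrt1 n) (Real.sqrt_nonneg _)
  calc C₀ * Real.sqrt (Real.log (1 + 2*v) / (2*v))
      ≤ C₀ * ((2 * (3/4) ^ n) * Real.sqrt (Real.log (1 + u) / u)) :=
        mul_le_mul_of_nonneg_left hfin hC₀
    _ = C₀ * Real.sqrt (Real.log (1 + u) / u) * (2 * (3/4) ^ n) := by ring

/-- chain bound -/
private lemma chain_bound (C₀ : ℝ) (hC₀ : 0 ≤ C₀) (f : ℝ → ℝ)
    (hadd : ∀ s t : ℝ, 1 < s → 1 < t →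
      |f (t + s) - f t - f s| ≤
        C₀ * (s + t) ^ ((1:ℝ)/2) * (Real.log (1 + s + t)) ^ ((1:ℝ)/2))
    (u : ℝ) (hu : 1 < u) (n : ℕ) :
    |f (2 ^ n * u) / (2 ^ n * u) - f u / u| ≤
      (8 - 8 * (3/4) ^ n) * (C₀ * Real.sqrt (Real.log (1 + u) / u)) := by
  have hE : 0 ≤ C₀ * Real.sqrt (Real.log (1 + u) / u) := by positivity
  induction n with
  | zero => simp
  | succ n ih =>
    have hstep := step_bound C₀ hC₀ f hadd u hu n
    have htri : |f (2 ^ (n+1) * u) / (2 ^ (n+1) * u) - f u / u| ≤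
        |f (2 ^ (n+1) * u) / (2 ^ (n+1) * u) - f (2 ^ n * u) / (2 ^ n * u)| +
        |f (2 ^ n * u) / (2 ^ n * u) - f u / u| := by
      exact abs_sub_le _ _ _
    have hpow : (0:ℝ) ≤ (3/4) ^ n := by positivity
    calc |f (2 ^ (n+1) * u) / (2 ^ (n+1) * u) - f u / u|
        ≤ C₀ * Real.sqrt (Real.log (1 + u) / u) * (2 * (3/4) ^ n) +
          (8 - 8 * (3/4) ^ n) * (C₀ * Real.sqrt (Real.log (1 + u) / u)) :=
          htri.trans (add_le_add hstep ih)
      _ = (8 - 6 * (3/4) ^ n) * (C₀ * Real.sqrt (Real.log (1 + u) / u)) := by ring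
      _ = (8 - 8 * (3/4) ^ (n+1)) * (C₀ * Real.sqrt (Real.log (1 + u) / u)) := by
          rw [pow_succ]; ring

/-- Approximate additivity implies convergence of `f(t)/t` with rate
`t^{-1/2} log^{1/2}(1+t)` (Lemma 4.4). -/
theorem approx_additive_limit (C₀ L : ℝ) (hC₀ : 1 ≤ C₀) (hL : 1 ≤ L)
    (f : ℝ → ℝ)
    (hbd : ∀ t : ℝ, 1 < t → |f t| ≤ L * t)
    (hadd : ∀ s t : ℝ, 1 < s → 1 < t →
      |f (t + s) - f t - f s| ≤
        C₀ * (s + t) ^ ((1:ℝ)/2) * (Real.log (1 + s + t)) ^ ((1:ℝ)/2)) :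
    ∃ m C : ℝ, ∀ t : ℝ, 1 < t →
      |f t / t - m| ≤ C * t ^ (-(1:ℝ)/2) * (Real.log (1 + t)) ^ ((1:ℝ)/2) := by
  have hC₀0 : (0:ℝ) ≤ C₀ := by linarith
  -- boundedness of f t / t
  have hg_bd : ∀ v : ℝ, 1 < v → |f v / v| ≤ L := by
    intro v hv
    have hv0 : 0 < v := lt_trans one_pos hv
    rw [abs_div, abs_of_pos hv0, div_le_iff₀ hv0]
    exact hbd v hv
  -- existence of limits along doubling sequences
  have key_exists : ∀ u : ℝ, ∃ l : ℝ, 1 < u →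
      Tendsto (fun n : ℕ => f (2 ^ n * u) / (2 ^ n * u)) atTop (𝓝 l) := by
    intro u
    by_cases hu : 1 < u
    · have hc : CauchySeq (fun n : ℕ => f (2 ^ n * u) / (2 ^ n * u)) := by
        apply cauchySeq_of_le_geometric (3/4)
          (C₀ * Real.sqrt (Real.log (1 + u) / u) * 2) (by norm_num)
        intro n
        rw [Real.dist_eq, abs_sub_comm]
        have := step_bound C₀ hC₀0 f hadd u hu n
        calc |f (2 ^ (n+1) * u) / (2 ^ (n+1) * u) - f (2 ^ n * u) / (2 ^ n * u)|
            ≤ C₀ * Real.sqrt (Real.log (1 + u) / u) * (2 * (3/4) ^ n) := this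
          _ = C₀ * Real.sqrt (Real.log (1 + u) / u) * 2 * (3/4) ^ n := by ring
      obtain ⟨l, hl⟩ := cauchySeq_tendsto_of_complete hc
      exact ⟨l, fun _ => hl⟩
    · exact ⟨0, fun h => absurd h hu⟩
  choose m hm using key_exists
  -- |m u| ≤ L
  have hml : ∀ u : ℝ, 1 < u → |m u| ≤ L := by
    intro u hu
    have h1 : Tendsto (fun n : ℕ => |f (2 ^ n * u) / (2 ^ n * u)|) atTop (𝓝 |m u|) :=
      (hm u hu).abs
    exact le_of_tendsto h1 (Eventually.of_forall fun n =>
      hg_bd _ (one_lt_pow_mul hu n))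
  -- approximation of f u / u by m u
  have happrox : ∀ u : ℝ, 1 < u →
      |f u / u - m u| ≤ 8 * (C₀ * Real.sqrt (Real.log (1 + u) / u)) := by
    intro u hu
    have h1 : Tendsto (fun n : ℕ => |f u / u - f (2 ^ n * u) / (2 ^ n * u)|) atTop
        (𝓝 |f u / u - m u|) := (tendsto_const_nhds.sub (hm u hu)).abs
    refine le_of_tendsto h1 (Eventually.of_forall fun n => ?_)
    have := chain_bound C₀ hC₀0 f hadd u hu n
    rw [abs_sub_comm]
    refine this.trans ?_
    have hE : 0 ≤ C₀ * Real.sqrt (Real.log (1 + u) / u) := by positivity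
    have hpow : (0:ℝ) ≤ (3/4) ^ n := by positivity
    nlinarith
  -- additivity of u * m u
  have haddm : ∀ a b : ℝ, 1 < a → 1 < b →
      (a + b) * m (a + b) = a * m a + b * m b := by
    intro a b ha hb
    have hc : 1 < a + b := by linarith
    have ha0 : (0:ℝ) < a := lt_trans one_pos ha
    have hb0 : (0:ℝ) < b := lt_trans one_pos hb
    have hc0 : (0:ℝ) < a + b := by linarith
    have hx : Tendsto (fun n : ℕ =>
        a * (f (2 ^ n * a) / (2 ^ n * a)) + b * (f (2 ^ n * b) / (2 ^ n * b)))
        atTop (𝓝 (a * m a + b * m b)) :=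
      ((hm a ha).const_mul a).add ((hm b hb).const_mul b)
    have hy : Tendsto (fun n : ℕ =>
        (a + b) * (f (2 ^ n * (a + b)) / (2 ^ n * (a + b))))
        atTop (𝓝 ((a + b) * m (a + b))) := (hm _ hc).const_mul _
    have hbound : ∀ n : ℕ,
        |(a + b) * (f (2 ^ n * (a + b)) / (2 ^ n * (a + b))) -
          (a * (f (2 ^ n * a) / (2 ^ n * a)) + b * (f (2 ^ n * b) / (2 ^ n * b)))| ≤
        (C₀ * Real.sqrt ((a + b) * Real.log (1 + (a + b)))) * (3 * (3/4) ^ n) := by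
      intro n
      have hp : (0:ℝ) < 2 ^ n := by positivity
      have h2a : 1 < 2 ^ n * a := one_lt_pow_mul ha n
      have h2b : 1 < 2 ^ n * b := one_lt_pow_mul hb n
      have hrw : (a + b) * (f (2 ^ n * (a + b)) / (2 ^ n * (a + b))) -
          (a * (f (2 ^ n * a) / (2 ^ n * a)) + b * (f (2 ^ n * b) / (2 ^ n * b)))
          = (f (2 ^ n * (a + b)) - f (2 ^ n * a) - f (2 ^ n * b)) / 2 ^ n := by
        field_simp
        ring
      rw [hrw]
      have h := hadd (2 ^ n * b) (2 ^ n * a) h2b h2a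
      rw [show (2:ℝ) ^ n * a + 2 ^ n * b = 2 ^ n * (a + b) from by ring,
          show (1:ℝ) + 2 ^ n * b + 2 ^ n * a = 1 + 2 ^ n * (a + b) from by ring,
          show (2:ℝ) ^ n * b + 2 ^ n * a = 2 ^ n * (a + b) from by ring,
          ← Real.sqrt_eq_rpow, ← Real.sqrt_eq_rpow] at h
      rw [abs_div, abs_of_pos hp]
      have hQ0 : 0 ≤ Real.log (1 + 2 ^ n * (a + b)) := Real.log_nonneg (by nlinarith)
      have hstep : |f (2 ^ n * (a + b)) - f (2 ^ n * a) - f (2 ^ n * b)| / 2 ^ n ≤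
          C₀ * Real.sqrt (2 ^ n * (a + b)) * Real.sqrt (Real.log (1 + 2 ^ n * (a + b)))
            / 2 ^ n := div_le_div_of_nonneg_right h hp.le
      refine hstep.trans ?_
      have heq : C₀ * Real.sqrt (2 ^ n * (a + b)) *
          Real.sqrt (Real.log (1 + 2 ^ n * (a + b))) / 2 ^ n
          = C₀ * Real.sqrt ((a + b) * Real.log (1 + 2 ^ n * (a + b)) / 2 ^ n) := by
        rw [mul_assoc, mul_div_assoc]
        congr 1
        have hQQ : (0:ℝ) ≤ 2 ^ n * (a + b) * Real.log (1 + 2 ^ n * (a + b)) :=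
          mul_nonneg (by positivity) hQ0
        rw [← Real.sqrt_mul (by positivity), sqrt_div_helper _ _ hQQ hp.le]
        congr 1
        field_simp
      rw [heq]
      have hlog : (a + b) * Real.log (1 + 2 ^ n * (a + b)) / 2 ^ n ≤
          ((a + b) * Real.log (1 + (a + b))) * (((n:ℝ) + 1) / 2 ^ n) := by
        have h1 := aux_log' (a + b) hc n
        rw [div_le_iff₀ hp] at *
        have h2 : 0 ≤ (a + b) := by linarith
        calc (a + b) * Real.log (1 + 2 ^ n * (a + b))
            ≤ (a + b) * (((n:ℝ) + 1) * Real.log (1 + (a + b))) :=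
              mul_le_mul_of_nonneg_left h1 h2
          _ = (a + b) * Real.log (1 + (a + b)) * (((n:ℝ) + 1) / 2 ^ n) * 2 ^ n := by
              field_simp
      have hmono := Real.sqrt_le_sqrt hlog
      have hsplit : Real.sqrt (((a + b) * Real.log (1 + (a + b))) * (((n:ℝ) + 1) / 2 ^ n))
          = Real.sqrt ((a + b) * Real.log (1 + (a + b))) * Real.sqrt (((n:ℝ) + 1) / 2 ^ n) :=
        Real.sqrt_mul (mul_nonneg (by linarith) (Real.log_nonneg (by linarith))) _
      have hfin : Real.sqrt ((a + b) * Real.log (1 + 2 ^ n * (a + b)) / 2 ^ n) ≤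
          Real.sqrt ((a + b) * Real.log (1 + (a + b))) * (3 * (3/4) ^ n) := by
        refine hmono.trans ?_
        rw [hsplit]
        exact mul_le_mul_of_nonneg_left (aux_sqrt2 n) (Real.sqrt_nonneg _)
      calc C₀ * Real.sqrt ((a + b) * Real.log (1 + 2 ^ n * (a + b)) / 2 ^ n)
          ≤ C₀ * (Real.sqrt ((a + b) * Real.log (1 + (a + b))) * (3 * (3/4) ^ n)) :=
            mul_le_mul_of_nonneg_left hfin hC₀0
        _ = (C₀ * Real.sqrt ((a + b) * Real.log (1 + (a + b)))) * (3 * (3/4) ^ n) := by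
            ring
    have hdiff : Tendsto (fun n : ℕ =>
        (a + b) * (f (2 ^ n * (a + b)) / (2 ^ n * (a + b))) -
          (a * (f (2 ^ n * a) / (2 ^ n * a)) + b * (f (2 ^ n * b) / (2 ^ n * b))))
        atTop (𝓝 0) := by
      have hb0' : Tendsto (fun n : ℕ =>
          (C₀ * Real.sqrt ((a + b) * Real.log (1 + (a + b)))) * (3 * ((3:ℝ)/4) ^ n))
          atTop (𝓝 0) := by
        have := (tendsto_pow_atTop_nhds_zero_of_lt_one
          (by norm_num : (0:ℝ) ≤ 3/4) (by norm_num)).const_mul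
          ((C₀ * Real.sqrt ((a + b) * Real.log (1 + (a + b)))) * 3)
        simpa [mul_assoc] using this
      have habs : Tendsto (fun n : ℕ =>
          |(a + b) * (f (2 ^ n * (a + b)) / (2 ^ n * (a + b))) -
            (a * (f (2 ^ n * a) / (2 ^ n * a)) + b * (f (2 ^ n * b) / (2 ^ n * b)))|)
          atTop (𝓝 0) :=
        squeeze_zero (fun n => abs_nonneg _) hbound hb0'
      exact tendsto_zero_iff_abs_tendsto_zero _ |>.mpr habs
    have hy' : Tendsto (fun n : ℕ =>
        a * (f (2 ^ n * a) / (2 ^ n * a)) + b * (f (2 ^ n * b) / (2 ^ n * b)))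
        atTop (𝓝 ((a + b) * m (a + b) - 0)) := hy.sub hdiff |>.congr (fun n => by ring)
    have := tendsto_nhds_unique hx hy'
    linarith [this]
  -- multiples
  have hmul : ∀ u : ℝ, 1 < u → ∀ N : ℕ, 1 ≤ N →
      (N:ℝ) * u * m ((N:ℝ) * u) = (N:ℝ) * (u * m u) := by
    intro u hu N hN
    induction N, hN using Nat.le_induction with
    | base => norm_num
    | succ N hN ih =>
      have hNu : 1 < (N:ℝ) * u := by
        have : (1:ℝ) ≤ (N:ℝ) := by exact_mod_cast hN
        nlinarith
      have h2 := haddm ((N:ℝ) * u) u hNu hu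
      have e : (N:ℝ) * u + u = ((N:ℝ) + 1) * u := by ring
      rw [e] at h2
      push_cast
      rw [h2, ih]
      ring
  -- m is constant
  have hconst : ∀ t : ℝ, 1 < t → m t = m 2 := by
    intro t ht
    have ht0 : (0:ℝ) < t := lt_trans one_pos ht
    have key : ∀ N : ℕ, 4 < (N:ℝ) * t → (N:ℝ) * |t * (m t - m 2)| ≤ 6 * L := by
      intro N hN
      have hN0 : (0:ℝ) < (N:ℝ) * t := by linarith
      have hN1 : 1 ≤ N := by
        by_contra h
        push_neg at h
        interval_cases N
        simp at hN0
      set M : ℕ := ⌈((N:ℝ) * t - 3) / 2⌉₊ with hM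
      have hM1 : 1 ≤ M := Nat.one_le_ceil_iff.mpr (by linarith)
      have hMu : ((N:ℝ) * t - 3) / 2 ≤ (M:ℝ) := Nat.le_ceil _
      have hMl : (M:ℝ) < ((N:ℝ) * t - 3) / 2 + 1 := Nat.ceil_lt_add_one (by linarith)
      set w : ℝ := (N:ℝ) * t - 2 * M with hw
      have hw1 : 1 < w := by rw [hw]; linarith
      have hw3 : w ≤ 3 := by rw [hw]; linarith
      have h2M : 1 < 2 * (M:ℝ) := by
        have : (1:ℝ) ≤ (M:ℝ) := by exact_mod_cast hM1
        linarith
      have hsum : 2 * (M:ℝ) + w = (N:ℝ) * t := by rw [hw]; ring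
      have E1 : (N:ℝ) * t * m ((N:ℝ) * t) = (N:ℝ) * (t * m t) := hmul t ht N hN1
      have E2 := haddm (2 * (M:ℝ)) w h2M hw1
      rw [hsum] at E2
      have E3 : (M:ℝ) * 2 * m ((M:ℝ) * 2) = (M:ℝ) * (2 * m 2) :=
        hmul 2 one_lt_two M hM1
      rw [mul_comm (M:ℝ) 2] at E3
      have Ew : (N:ℝ) * (t * (m t - m 2)) = w * (m w - m 2) := by
        have h1 : (N:ℝ) * (t * m t) = 2 * (M:ℝ) * m (2 * (M:ℝ)) + w * m w := by
          rw [← E1, E2]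
        rw [E3] at h1
        have h2 : 2 * (M:ℝ) = (N:ℝ) * t - w := by linarith [hsum]
        linear_combination h1 + m 2 * h2
      have hmwL : |m w| ≤ L := hml w hw1
      have hm2L : |m 2| ≤ L := hml 2 one_lt_two
      have habs : |w * (m w - m 2)| ≤ 6 * L := by
        rw [abs_mul, abs_of_pos (by linarith : (0:ℝ) < w)]
        have h1 : |m w - m 2| ≤ 2 * L := by
          calc |m w - m 2| ≤ |m w| + |m 2| := abs_sub _ _
            _ ≤ 2 * L := by linarith
        nlinarith [abs_nonneg (m w - m 2)]
      calc (N:ℝ) * |t * (m t - m 2)| = |(N:ℝ) * (t * (m t - m 2))| := by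
            rw [abs_mul ((N:ℝ)) (t * (m t - m 2)), Nat.abs_cast]
        _ = |w * (m w - m 2)| := by rw [Ew]
        _ ≤ 6 * L := habs
    have hzero : t * (m t - m 2) = 0 := by
      by_contra h
      have hx : 0 < |t * (m t - m 2)| := abs_pos.mpr h
      obtain ⟨N, hNgt⟩ := exists_nat_gt (max (6 * L / |t * (m t - m 2)|) (4 / t))
      have hN4 : 4 < (N:ℝ) * t := by
        have h1 : 4 / t < (N:ℝ) := lt_of_le_of_lt (le_max_right _ _) hNgt
        calc (4:ℝ) = 4 / t * t := by field_simp
          _ < (N:ℝ) * t := by nlinarith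
      have h2 := key N hN4
      have h3 : 6 * L / |t * (m t - m 2)| < (N:ℝ) :=
        lt_of_le_of_lt (le_max_left _ _) hNgt
      rw [div_lt_iff₀ hx] at h3
      linarith
    have : m t - m 2 = 0 := by
      rcases mul_eq_zero.mp hzero with h | h
      · exact absurd h (ne_of_gt ht0)
      · exact h
    linarith
  -- conclusion
  refine ⟨m 2, 8 * C₀, fun t ht => ?_⟩
  have ht0 : (0:ℝ) < t := lt_trans one_pos ht
  have h1 := happrox t ht
  rw [hconst t ht] at h1
  refine h1.trans_eq ?_
  have hlog0 : 0 ≤ Real.log (1 + t) := Real.log_nonneg (by linarith)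
  rw [Real.sqrt_div hlog0 t]
  rw [show (-(1:ℝ)/2) = -(1/2) from by norm_num, Real.rpow_neg ht0.le,
    ← Real.sqrt_eq_rpow, ← Real.sqrt_eq_rpow]
  have hst : Real.sqrt t ≠ 0 := by positivity
  field_simp
end

section
/- Let R ≥ 1, β ∈ (0,1], γ > 0, M, C₀ > 0, and let F : ℝ^d → ℝ be a function such that for all ξ, η in the closed ball of radius R with ξ ≠ 0 and η ≠ 0, |F(ξ) − F(η)| ≤ min( M (min(|ξ|, |η|))^{−γ} |ξ−η|^{β} , C₀ (|ξ| + |η|) ). Then there exists a constant C (depending on R, β, γ, M, C₀) such that for all such ξ, η, |F(ξ) − F(η)| ≤ C |ξ − η|^{β/(1+γ)}; that is, F is Hölder continuous with exponent β/(1+γ) on the punctured ball. -/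
/-- Interpolation between a degenerate modulus and the trivial growth bound yields
Hölder continuity with exponent `β/(1+γ)` (Hölder regularity of `H̄`). -/
theorem holder_interpolation (d : ℕ) (R β γ M C₀ : ℝ)
    (hR : 1 ≤ R) (hβ : 0 < β) (hβ' : β ≤ 1) (hγ : 0 < γ) (hM : 0 < M) (hC₀ : 0 < C₀)
    (F : EuclideanSpace ℝ (Fin d) → ℝ)
    (hF : ∀ ξ η : EuclideanSpace ℝ (Fin d), ‖ξ‖ ≤ R → ‖η‖ ≤ R → ξ ≠ 0 → η ≠ 0 →
      |F ξ - F η| ≤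
        min (M * (min ‖ξ‖ ‖η‖) ^ (-γ) * ‖ξ - η‖ ^ β) (C₀ * (‖ξ‖ + ‖η‖))) :
    ∃ C : ℝ, ∀ ξ η : EuclideanSpace ℝ (Fin d), ‖ξ‖ ≤ R → ‖η‖ ≤ R → ξ ≠ 0 → η ≠ 0 →
      |F ξ - F η| ≤ C * ‖ξ - η‖ ^ (β / (1 + γ)) := by
  have h1γ : (0:ℝ) < 1 + γ := by linarith
  set α := β / (1 + γ) with hα
  have hα0 : 0 < α := div_pos hβ h1γ
  have hα1 : α ≤ 1 := by
    rw [hα, div_le_one h1γ]; linarith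
  have hC : 0 ≤ M + C₀ * (2 + 2 * R) := by nlinarith
  refine ⟨M + C₀ * (2 + 2 * R), ?_⟩
  intro ξ η hξ hη hξ0 hη0
  set r := ‖ξ - η‖ with hrdef
  have hr0 : 0 ≤ r := norm_nonneg _
  rcases eq_or_lt_of_le hr0 with h0 | hr
  · have hξη : ξ = η := by
      have := norm_eq_zero.mp h0.symm
      exact sub_eq_zero.mp this
    rw [hξη, sub_self, abs_zero, ← h0, Real.zero_rpow (ne_of_gt hα0), mul_zero]
  · have hm0 : 0 < min ‖ξ‖ ‖η‖ := lt_min (norm_pos_iff.mpr hξ0) (norm_pos_iff.mpr hη0)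
    have ht0 : 0 < r ^ α := Real.rpow_pos_of_pos hr α
    have key := hF ξ η hξ hη hξ0 hη0
    by_cases hcase : r ^ α ≤ min ‖ξ‖ ‖η‖
    · have h1 : (min ‖ξ‖ ‖η‖) ^ (-γ) ≤ (r ^ α) ^ (-γ) :=
        Real.rpow_le_rpow_of_nonpos ht0 hcase (by linarith)
      have h2 : (r ^ α) ^ (-γ) * r ^ β = r ^ α := by
        rw [← Real.rpow_mul hr0, ← Real.rpow_add hr]
        congr 1
        rw [hα]; field_simp; ring
      calc |F ξ - F η| ≤ M * (min ‖ξ‖ ‖η‖) ^ (-γ) * r ^ β :=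
              key.trans (min_le_left _ _)
        _ ≤ M * (r ^ α) ^ (-γ) * r ^ β := by gcongr
        _ = M * r ^ α := by rw [mul_assoc, h2]
        _ ≤ (M + C₀ * (2 + 2 * R)) * r ^ α :=
              mul_le_mul_of_nonneg_right (by nlinarith) ht0.le
    · push_neg at hcase
      have ha : ‖ξ‖ - ‖η‖ ≤ r := norm_sub_norm_le ξ η
      have hb : ‖η‖ - ‖ξ‖ ≤ r := by
        have := norm_sub_norm_le η ξ
        rwa [norm_sub_rev] at this
      have hsum : ‖ξ‖ + ‖η‖ ≤ 2 * min ‖ξ‖ ‖η‖ + r := by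
        rcases min_cases ‖ξ‖ ‖η‖ with ⟨h, _⟩ | ⟨h, _⟩ <;> rw [h] <;> linarith
      have hr2R : r ≤ 2 * R := by
        have := norm_sub_le ξ η
        linarith
      have h2R1 : (1:ℝ) ≤ 2 * R := by linarith
      have hsplit : r = r ^ α * r ^ (1 - α) := by
        rw [← Real.rpow_add hr]
        norm_num
      have hup : r ^ (1 - α) ≤ 2 * R := by
        calc r ^ (1 - α) ≤ (2 * R) ^ (1 - α) :=
              Real.rpow_le_rpow hr0 hr2R (by linarith)
          _ ≤ (2 * R) ^ (1:ℝ) :=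
              Real.rpow_le_rpow_of_exponent_le h2R1 (by linarith)
          _ = 2 * R := Real.rpow_one _
      calc |F ξ - F η| ≤ C₀ * (‖ξ‖ + ‖η‖) := key.trans (min_le_right _ _)
        _ ≤ C₀ * (2 * (r ^ α) + r ^ α * (2 * R)) := by
              have hrb : r ≤ r ^ α * (2 * R) := by
                nth_rewrite 1 [hsplit]
                exact mul_le_mul_of_nonneg_left hup ht0.le
              have : ‖ξ‖ + ‖η‖ ≤ 2 * (r ^ α) + r ^ α * (2 * R) := by nlinarith
              exact mul_le_mul_of_nonneg_left this hC₀.le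
        _ ≤ (M + C₀ * (2 + 2 * R)) * r ^ α := by nlinarith [mul_pos hM ht0]
end
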